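/- arXiv:2405.05834 — 2 statements merged into one kernel-verified Lean document; each statement's English description precedes it below -/
import Mathlib

section
/- (Gauss–Lucas) Let P be a nonconstant polynomial with complex coefficients. Then every root of the derivative P' lies in the convex hull of the set of roots of P. -/
/-!
At a zero `z` of `P'` that is not a zero of `P`, the logarithmic derivative
`P'(z) / P(z) = ∑ᵣ 1 / (z - r)` (over the roots `r` of `P`, with multiplicity) vanishes.
Conjugating, `∑ᵣ (z - r) / |z - r|² = 0`, so `z` is the center of mass of the roots with the
positive weights `1 / |z - r|²`.
-/

open Polynomial ComplexConjugate

theorem Finset.centerMass_eq_of_sum_smul_sub_eq_zero {R E ι : Type*} [Field R] [AddCommGroup E]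
    [Module R E] {t : Finset ι} {w : ι → R} {p : ι → E} {z : E} (hw : ∑ i ∈ t, w i ≠ 0)
    (h : ∑ i ∈ t, w i • (z - p i) = 0) : t.centerMass w p = z := by
  have hbalance : (∑ i ∈ t, w i) • z - ∑ i ∈ t, w i • p i = 0 := by
    simpa only [smul_sub, Finset.sum_sub_distrib, ← Finset.sum_smul] using h
  rw [Finset.centerMass, ← sub_eq_zero.1 hbalance, smul_smul, inv_mul_cancel₀ hw, one_smul]

theorem Complex.conj_inv_eq_inv_normSq_smul (w : ℂ) : conj w⁻¹ = (normSq w)⁻¹ • w := by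
  rw [inv_def, map_mul, conj_conj, conj_ofReal, real_smul, mul_comm]

theorem Complex.mem_convexHull_of_sum_inv_sub_eq_zero {s : Multiset ℂ} {z : ℂ} (hs : s ≠ 0)
    (h : (s.map fun r => (z - r)⁻¹).sum = 0) : z ∈ convexHull ℝ {r | r ∈ s} := by
  classical
  by_cases hzs : z ∈ s
  · exact subset_convexHull ℝ _ hzs
  set w : ℂ → ℝ := fun r => s.count r * (normSq (z - r))⁻¹
  have hw₀ : ∀ r ∈ s.toFinset, 0 ≤ w r := fun r _ =>
    mul_nonneg (Nat.cast_nonneg _) (inv_nonneg.2 (normSq_nonneg _))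
  have hwpos : 0 < ∑ r ∈ s.toFinset, w r := by
    obtain ⟨r, hr⟩ := Multiset.exists_mem_of_ne_zero hs
    have hzr : z - r ≠ 0 := sub_ne_zero.2 (ne_of_mem_of_not_mem hr hzs).symm
    have hcount : 0 < s.count r := Multiset.count_pos.2 hr
    exact Finset.sum_pos' hw₀ ⟨r, Multiset.mem_toFinset.2 hr,
      mul_pos (Nat.cast_pos.2 hcount) (inv_pos.2 (normSq_pos.2 hzr))⟩
  have hbalance : ∑ r ∈ s.toFinset, w r • (z - r) = 0 := by
    have := congrArg conj h
    rw [map_multiset_sum, Multiset.map_map, map_zero, Finset.sum_multiset_map_count] at this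
    simpa only [Function.comp_def, conj_inv_eq_inv_normSq_smul, w, mul_smul,
      Nat.cast_smul_eq_nsmul] using this
  rw [← Finset.centerMass_eq_of_sum_smul_sub_eq_zero hwpos.ne' hbalance]
  exact convexHull_mono (fun r hr => Multiset.mem_toFinset.1 hr)
    (s.toFinset.centerMass_id_mem_convexHull hw₀ hwpos)

/-- **Gauss–Lucas theorem**: every root of the derivative of a nonconstant complex polynomial
lies in the convex hull (over `ℝ`) of the set of roots of the polynomial. -/
theorem gauss_lucas (P : Polynomial ℂ) (hP : 0 < P.degree) :
    ∀ z : ℂ, P.derivative.eval z = 0 → z ∈ convexHull ℝ {w : ℂ | P.eval w = 0} := by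
  intro z hz
  by_cases hPz : P.eval z = 0
  · exact subset_convexHull ℝ _ hPz
  have hsum : (P.roots.map fun r => (z - r)⁻¹).sum = 0 := by
    have hlogDeriv := (IsAlgClosed.splits P).eval_derivative_eq_eval_mul_sum hPz
    rw [hz, eq_comm, mul_eq_zero] at hlogDeriv
    simpa only [one_div] using hlogDeriv.resolve_left hPz
  have hroots : P.roots ≠ 0 := IsAlgClosed.roots_eq_zero_iff_degree_nonpos.not.2 hP.not_ge
  refine convexHull_mono (fun r hr => ?_)
    (Complex.mem_convexHull_of_sum_inv_sub_eq_zero hroots hsum)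
  exact (mem_roots'.1 hr).2
end

section
/- Let a ≥ 0 and b ∈ ℝ. Then the polynomials Q_k(z) = (1 − az²/k)^k (1 + bz/k)^k have only real roots for every k ≥ 1, and Q_k converges locally uniformly on ℂ to e^{−az² + bz} as k → ∞. -/
/-!
The roots of `Q_k` are those of `1 - a z² / k`, where `z² = k / a ≥ 0`, and the root `-k / b` of
`1 + b z / k`; all are real. For the limit, `(1 + w / n) ^ n - exp w = x ^ n - y ^ n` with
`x = 1 + w / n` and `y = exp (w / n)`; both have norm at most `exp (‖w‖ / n)` and
`‖x - y‖ ≤ ‖w / n‖ ^ 2`, so the error is `O(‖w‖² exp ‖w‖ / n)` and `(1 + w / n) ^ n → exp w`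
locally uniformly. Substituting `w = -a z²` and `w = b z` and multiplying the two limits gives
`Q_k → exp (-a z² + b z)`.
-/

open Complex Filter Metric Topology

theorem norm_pow_sub_pow_le {R : Type*} [NormedCommRing R] [NormOneClass R] {x y : R} {M : ℝ}
    (hx : ‖x‖ ≤ M) (hy : ‖y‖ ≤ M) (n : ℕ) :
    ‖x ^ n - y ^ n‖ ≤ n * M ^ (n - 1) * ‖x - y‖ := by
  have hM : 0 ≤ M := (norm_nonneg x).trans hx
  have hterm : ∀ i ∈ Finset.range n, ‖x ^ i * y ^ (n - 1 - i)‖ ≤ M ^ (n - 1) := fun i hi ↦ by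
    calc ‖x ^ i * y ^ (n - 1 - i)‖ ≤ ‖x‖ ^ i * ‖y‖ ^ (n - 1 - i) :=
          (norm_mul_le _ _).trans (by gcongr <;> exact norm_pow_le _ _)
      _ ≤ M ^ i * M ^ (n - 1 - i) := by gcongr
      _ = M ^ (n - 1) := by
          rw [← pow_add, Nat.add_sub_cancel' (by have := Finset.mem_range.mp hi; omega)]
  calc ‖x ^ n - y ^ n‖ ≤ ‖∑ i ∈ Finset.range n, x ^ i * y ^ (n - 1 - i)‖ * ‖x - y‖ := by
        rw [← geom_sum₂_mul]; exact norm_mul_le _ _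
    _ ≤ n * M ^ (n - 1) * ‖x - y‖ := by
        gcongr
        simpa using norm_sum_le_of_le _ hterm

theorem norm_one_add_div_pow_sub_exp_le (w : ℂ) {n : ℕ} (hw : ‖w‖ ≤ n) :
    ‖(1 + w / n) ^ n - exp w‖ ≤ ‖w‖ ^ 2 * Real.exp ‖w‖ / n := by
  rcases Nat.eq_zero_or_pos n with rfl | hn
  · simp [norm_le_zero_iff.mp (by simpa using hw)]
  have hn' : (0 : ℝ) < n := Nat.cast_pos.mpr hn
  have hwn : ‖w / n‖ = ‖w‖ / n := by rw [norm_div, norm_natCast]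
  set M := Real.exp (‖w‖ / n)
  have hx : ‖1 + w / n‖ ≤ M :=
    calc ‖1 + w / n‖ ≤ 1 + ‖w‖ / n := by simpa [hwn] using norm_add_le (1 : ℂ) (w / n)
      _ ≤ M := by linarith [Real.add_one_le_exp (‖w‖ / n)]
  have hy : ‖exp (w / n)‖ ≤ M := by
    rw [norm_exp]; exact Real.exp_le_exp.mpr ((re_le_norm _).trans hwn.le)
  have hxy : ‖(1 + w / n) - exp (w / n)‖ ≤ (‖w‖ / n) ^ 2 := by
    rw [norm_sub_rev, ← sub_sub, ← hwn]
    exact norm_exp_sub_one_sub_id_le (by rw [hwn, div_le_one hn']; exact hw)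
  have hM : M ^ (n - 1) ≤ M ^ n := pow_le_pow_right₀ (Real.one_le_exp (by positivity)) (by omega)
  have hMn : M ^ n = Real.exp ‖w‖ := by
    rw [← Real.exp_nat_mul, mul_div_cancel₀ _ hn'.ne']
  calc ‖(1 + w / n) ^ n - exp w‖ = ‖(1 + w / n) ^ n - exp (w / n) ^ n‖ := by
        rw [← exp_nat_mul, mul_div_cancel₀ _ (Nat.cast_ne_zero.mpr hn.ne')]
    _ ≤ n * M ^ (n - 1) * ‖(1 + w / n) - exp (w / n)‖ := norm_pow_sub_pow_le hx hy n
    _ ≤ n * M ^ n * (‖w‖ / n) ^ 2 := by gcongr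
    _ = ‖w‖ ^ 2 * Real.exp ‖w‖ / n := by rw [hMn]; field_simp

theorem tendstoUniformlyOn_one_add_div_pow_exp (R : ℝ) :
    TendstoUniformlyOn (fun (n : ℕ) (w : ℂ) ↦ (1 + w / n) ^ n) exp atTop (closedBall 0 R) := by
  rw [Metric.tendstoUniformlyOn_iff]
  intro ε hε
  have hbound : Tendsto (fun n : ℕ ↦ R ^ 2 * Real.exp R / n) atTop (𝓝 0) :=
    tendsto_const_div_atTop_nhds_zero_nat _
  filter_upwards [hbound.eventually_lt_const hε, eventually_ge_atTop ⌈R⌉₊] with n hlt hRn w hw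
  have hwR : ‖w‖ ≤ R := by simpa using hw
  rw [dist_comm, dist_eq]
  calc ‖(1 + w / n) ^ n - exp w‖ ≤ ‖w‖ ^ 2 * Real.exp ‖w‖ / n :=
        norm_one_add_div_pow_sub_exp_le w (hwR.trans ((Nat.le_ceil R).trans (mod_cast hRn)))
    _ ≤ R ^ 2 * Real.exp R / n := by gcongr
    _ < ε := hlt

theorem tendstoLocallyUniformly_one_add_div_pow_exp :
    TendstoLocallyUniformly (fun (n : ℕ) (w : ℂ) ↦ (1 + w / n) ^ n) exp atTop :=
  tendstoLocallyUniformly_of_forall_exists_nhds fun w ↦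
    ⟨closedBall 0 (‖w‖ + 1), closedBall_mem_nhds_of_mem (by simp),
      tendstoUniformlyOn_one_add_div_pow_exp _⟩

theorem im_eq_zero_of_sq_eq_ofReal {z : ℂ} {r : ℝ} (hr : 0 ≤ r) (h : z ^ 2 = r) : z.im = 0 := by
  have hre := congrArg re h
  have him := congrArg im h
  simp only [sq, mul_re, mul_im, ofReal_re, ofReal_im] at hre him
  by_contra him0
  have hre0 : z.re = 0 := (mul_eq_zero.mp (by linarith : z.re * z.im = 0)).resolve_right him0
  nlinarith [sq_pos_of_ne_zero him0]

theorem im_eq_zero_of_one_sub_mul_sq_div_eq_zero {a c : ℝ} (ha : 0 ≤ a) (hc : 0 ≤ c) {z : ℂ}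
    (h : 1 - a * z ^ 2 / c = 0) : z.im = 0 := by
  have hc0 : (c : ℂ) ≠ 0 := by rintro hc0; simp [hc0] at h
  have ha0 : (a : ℂ) ≠ 0 := by rintro ha0; simp [ha0] at h
  refine im_eq_zero_of_sq_eq_ofReal (r := c / a) (by positivity) ?_
  rw [ofReal_div, eq_div_iff ha0]
  field_simp at h
  linear_combination -h

theorem im_eq_zero_of_one_add_mul_div_eq_zero {b c : ℝ} {z : ℂ} (h : 1 + b * z / c = 0) :
    z.im = 0 := by
  have hc0 : (c : ℂ) ≠ 0 := by rintro hc0; simp [hc0] at h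
  have hb0 : (b : ℂ) ≠ 0 := by rintro hb0; simp [hb0] at h
  have hz : z = ((-c / b : ℝ) : ℂ) := by
    push_cast
    field_simp at h ⊢
    linear_combination h
  rw [hz, ofReal_im]

/-- For `a ≥ 0` and `b ∈ ℝ`, the polynomials `Q_k(z) = (1 − az²/k)^k (1 + bz/k)^k` have only
real roots for every `k ≥ 1`, and `Q_k → e^{−az² + bz}` locally uniformly on `ℂ`. -/
theorem real_roots_and_tendsto_exp (a b : ℝ) (ha : 0 ≤ a) :
    (∀ k : ℕ, 1 ≤ k → ∀ z : ℂ,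
        (1 - (a : ℂ) * z ^ 2 / (k : ℂ)) ^ k * (1 + (b : ℂ) * z / (k : ℂ)) ^ k = 0 → z.im = 0) ∧
    TendstoLocallyUniformly
      (fun (k : ℕ) (z : ℂ) =>
        (1 - (a : ℂ) * z ^ 2 / (k : ℂ)) ^ k * (1 + (b : ℂ) * z / (k : ℂ)) ^ k)
      (fun z : ℂ => Complex.exp (-(a : ℂ) * z ^ 2 + (b : ℂ) * z)) Filter.atTop := by
  refine ⟨fun k hk z hz ↦ ?_, ?_⟩
  · rw [← ofReal_natCast] at hz
    rcases mul_eq_zero.mp hz with h | h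
    · exact im_eq_zero_of_one_sub_mul_sq_div_eq_zero ha k.cast_nonneg
        ((pow_eq_zero_iff (by omega)).mp h)
    · exact im_eq_zero_of_one_add_mul_div_eq_zero ((pow_eq_zero_iff (by omega)).mp h)
  · have hquad := tendstoLocallyUniformly_one_add_div_pow_exp.comp (fun z : ℂ ↦ -(a : ℂ) * z ^ 2)
      (by fun_prop)
    have hlin := tendstoLocallyUniformly_one_add_div_pow_exp.comp (fun z : ℂ ↦ (b : ℂ) * z)
      (by fun_prop)
    convert hquad.mul₀ hlin (by fun_prop) (by fun_prop) using 1
    · ext k z; simp only [Function.comp, Pi.mul_apply]; ring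
    · ext z; simp only [Function.comp, Pi.mul_apply, exp_add]
end
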